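/- There is a constant c depending only on a₁ and a₂ such that for every nonnegative integer k and every X ≥ 2: ∫₀¹ |Re P_ℒ(θ)|^k dθ ≤ (ckΨ)^{k/2}, where Ψ = Σ_{p≤X²} 1/p (sum over primes). -/

import Mathlib

open Complex MeasureTheory ProbabilityTheory Filter Finset DirichletCharacter

noncomputable section

/-- The finset of primes `p ≤ X²`. -/
def primesUptoSq (X : ℝ) : Finset ℕ := (Finset.range (⌊X ^ 2⌋₊ + 1)).filter Nat.Prime

/-- The finset of primes `p ≤ x`. -/
def primesUpto (x : ℝ) : Finset ℕ := (Finset.range (⌊x⌋₊ + 1)).filter Nat.Prime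

/-- The Dirichlet polynomial `P_χ(γ) = ∑_{p ≤ X²} χ(p) p^{-1/2 - iγ}`. -/
def Pgamma {N : ℕ} (χ : DirichletCharacter ℂ N) (X γ : ℝ) : ℂ :=
  ∑ p ∈ primesUptoSq X, χ (p : ZMod N) * (p : ℂ) ^ (-(1 / 2 : ℂ) - I * γ)

/-- `P_ℒ(γ) = a₁ P_{χ₁}(γ) + a₂ P_{χ₂}(γ)`. -/
def PLgamma {N₁ N₂ : ℕ} (a₁ a₂ : ℝ) (χ₁ : DirichletCharacter ℂ N₁)
    (χ₂ : DirichletCharacter ℂ N₂) (X γ : ℝ) : ℂ :=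
  (a₁ : ℂ) * Pgamma χ₁ X γ + (a₂ : ℂ) * Pgamma χ₂ X γ

/-- The value of the random polynomial `P_χ(θ) = ∑_{p ≤ X²} χ(p) e^{2πiθ_p}/√p` at a
point `v = (θ_p)_p`. -/
def Ptheta {N : ℕ} (χ : DirichletCharacter ℂ N) (X : ℝ) (v : ℕ → ℝ) : ℂ :=
  ∑ p ∈ primesUptoSq X, χ (p : ZMod N) * Complex.exp (2 * Real.pi * I * (v p)) / Real.sqrt p

/-- `P_ℒ(θ) = a₁ P_{χ₁}(θ) + a₂ P_{χ₂}(θ)`. -/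
def PLtheta {N₁ N₂ : ℕ} (a₁ a₂ : ℝ) (χ₁ : DirichletCharacter ℂ N₁)
    (χ₂ : DirichletCharacter ℂ N₂) (X : ℝ) (v : ℕ → ℝ) : ℂ :=
  (a₁ : ℂ) * Ptheta χ₁ X v + (a₂ : ℂ) * Ptheta χ₂ X v

/-- The ordinates `γ ∈ (0, T]` of the zeros of `ζ` on the critical line (under RH, these
are exactly the ordinates of the nontrivial zeros of `ζ` in the upper half plane up to `T`). -/
def zetaZerosIn (T : ℝ) : Set ℝ :=
  {γ : ℝ | 0 < γ ∧ γ ≤ T ∧ riemannZeta (1 / 2 + I * γ) = 0}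

/-- `N(T)`, the number of nontrivial zeros of `ζ` with ordinate in `(0, T]`. -/
def NT (T : ℝ) : ℝ := ((zetaZerosIn T).ncard : ℝ)

/-- The Riemann Hypothesis: all nontrivial zeros of `ζ` lie on the critical line. -/
def RHzeta : Prop := ∀ s : ℂ, 0 < s.re → s.re < 1 → riemannZeta s = 0 → s.re = 1 / 2

/-- GRH for `L(s, χ)`: all nontrivial zeros of `L(s,χ)` lie on the critical line. -/
def GRHchar {N : ℕ} [NeZero N] (χ : DirichletCharacter ℂ N) : Prop :=
  ∀ s : ℂ, 0 < s.re → s.re < 1 → LFunction χ s = 0 → s.re = 1 / 2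

/-- Hypothesis 𝒟: no nontrivial zero of `L(s,χ)` coincides with a nontrivial zero of `ζ`. -/
def HypD {N : ℕ} [NeZero N] (χ : DirichletCharacter ℂ N) : Prop :=
  ∀ s : ℂ, 0 < s.re → s.re < 1 → riemannZeta s = 0 → LFunction χ s ≠ 0

/-- Hypothesis `H_{α,χ}`: there is `c > 0` such that for every `C ∈ (0,1)`, the limsup as
`T → ∞` of the proportion of ordinates `γ ∈ (0,T]` of zeros of `ζ` lying within `C/log T`
of an ordinate of a (critical-line) zero of `L(s,χ)` is at most `c C^α`. -/
def HypH {N : ℕ} [NeZero N] (χ : DirichletCharacter ℂ N) (α : ℝ) : Prop :=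
  ∃ c > (0 : ℝ), ∀ C : ℝ, 0 < C → C < 1 →
    Filter.limsup (fun T : ℝ =>
      (((zetaZerosIn T ∩ {γ : ℝ | ∃ x : ℝ,
          LFunction χ (1 / 2 + I * x) = 0 ∧ |x - γ| ≤ C / Real.log T}).ncard : ℝ) / NT T))
      Filter.atTop ≤ c * C ^ α

/-- `Ψ = ∑_{p ≤ X²} 1/p`. -/
def Psi (X : ℝ) : ℝ := ∑ p ∈ primesUptoSq X, (1 : ℝ) / p

/-- `Ψ(T) = ∑_{p ≤ T} 1/p`. -/
def PsiT (T : ℝ) : ℝ := ∑ p ∈ primesUpto T, (1 : ℝ) / p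

/-- The weight `w_X(n)`. -/
def wX (X : ℝ) (n : ℕ) : ℝ :=
  if (n : ℝ) ≤ X then 1 else Real.log (X ^ 2 / n) / Real.log X

/-- `Λ_X(n) = Λ(n) w_X(n)`. -/
def LambdaX (X : ℝ) (n : ℕ) : ℝ := ArithmeticFunction.vonMangoldt n * wX X n

/-- `σ₁ = 1/2 + 4/log X`. -/
def sigma1 (X : ℝ) : ℝ := 1 / 2 + 4 / Real.log X

/-!
Each summand of `Re P_ℒ(θ)` is a centred function of `θ_p` bounded by `(|a₁| + |a₂|) / √p`, hence
sub-Gaussian with variance proxy `(|a₁| + |a₂|)² / p` by Hoeffding's lemma. By independence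
`Re P_ℒ(θ)` is sub-Gaussian with proxy `σ² ≤ (|a₁| + |a₂|)² Ψ`, and a sub-Gaussian variable has
`E|Z|ᵏ ≤ k! t⁻ᵏ (E e^{tZ} + E e^{-tZ}) ≤ (4 e σ² k)^{k/2}` for the choice `t = √(k / σ²)`.
-/

open scoped NNReal Nat

lemma Real.abs_pow_le_factorial_div_pow_mul_exp_add_exp {t : ℝ} (ht : 0 < t) (x : ℝ) (k : ℕ) :
    |x| ^ k ≤ k ! / t ^ k * (Real.exp (t * x) + Real.exp (-t * x)) := by
  have hexp : Real.exp (t * |x|) ≤ Real.exp (t * x) + Real.exp (-t * x) := by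
    rcases abs_choice x with h | h <;> rw [h]
    · exact le_add_of_nonneg_right (Real.exp_pos _).le
    · rw [mul_neg, ← neg_mul]; exact le_add_of_nonneg_left (Real.exp_pos _).le
  rw [div_mul_eq_mul_div, le_div_iff₀ (by positivity), ← mul_pow, mul_comm |x|,
    ← div_le_iff₀' (by positivity)]
  exact (Real.pow_div_factorial_le_exp _ (by positivity) k).trans hexp

namespace ProbabilityTheory.HasSubgaussianMGF

variable {Ω : Type*} {m : MeasurableSpace Ω} {μ : Measure Ω} {X : Ω → ℝ} {c : ℝ≥0}

lemma integral_abs_pow_le_of_pos (h : HasSubgaussianMGF X c μ) (k : ℕ) {t : ℝ} (ht : 0 < t) :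
    ∫ ω, |X ω| ^ k ∂μ ≤ k ! / t ^ k * (2 * Real.exp (c * t ^ 2 / 2)) := by
  have hint := (h.integrable_exp_mul t).add (h.integrable_exp_mul (-t))
  calc ∫ ω, |X ω| ^ k ∂μ
      ≤ ∫ ω, k ! / t ^ k * (Real.exp (t * X ω) + Real.exp (-t * X ω)) ∂μ :=
        integral_mono_of_nonneg (ae_of_all _ fun ω => by positivity) (hint.const_mul _)
          (ae_of_all _ fun ω => Real.abs_pow_le_factorial_div_pow_mul_exp_add_exp ht _ k)
    _ = k ! / t ^ k * (mgf X μ t + mgf X μ (-t)) := by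
        rw [integral_const_mul, integral_add (h.integrable_exp_mul t) (h.integrable_exp_mul (-t))]
        rfl
    _ ≤ k ! / t ^ k * (2 * Real.exp (c * t ^ 2 / 2)) := by
        have := add_le_add (h.mgf_le t) (h.mgf_le (-t))
        rw [neg_sq] at this
        gcongr
        linarith

-- Take `t = √(k / c)` in `integral_abs_pow_le_of_pos`, and use `k! ≤ kᵏ`, `2 ≤ 4 ^ (k / 2)`.
lemma integral_abs_pow_le (h : HasSubgaussianMGF X c μ) (k : ℕ) :
    ∫ ω, |X ω| ^ k ∂μ ≤ (4 * Real.exp 1 * c * k) ^ ((k : ℝ) / 2) := by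
  rcases Nat.eq_zero_or_pos k with rfl | hk
  · simpa [mgf_zero'] using h.mgf_le 0
  rcases eq_zero_or_pos c with rfl | hc
  · rw [integral_congr_ae (g := 0) (h.ae_eq_zero_of_hasSubgaussianMGF_zero.mono fun ω hω => by
      simp [hω, hk.ne'])]
    simpa using Real.rpow_nonneg le_rfl _
  set t := Real.sqrt (k / c)
  have ht : 0 < t := Real.sqrt_pos.2 (by positivity)
  have ht2 : t ^ 2 = k / c := Real.sq_sqrt (by positivity)
  refine (h.integral_abs_pow_le_of_pos k ht).trans ?_
  rw [ht2, mul_div_cancel₀ _ (by positivity : (c : ℝ) ≠ 0),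
    ← pow_le_pow_iff_left₀ (by positivity) (by positivity) two_ne_zero,
    ← Real.rpow_natCast ((4 * Real.exp 1 * c * k) ^ ((k : ℝ) / 2)) 2,
    ← Real.rpow_mul (by positivity), Nat.cast_ofNat, div_mul_cancel₀ _ two_ne_zero,
    Real.rpow_natCast]
  have htk : (t ^ k) ^ 2 = (k / c) ^ k := by rw [← pow_mul, mul_comm, pow_mul, ht2]
  have hexp : Real.exp (k / 2) ^ 2 = Real.exp 1 ^ k := by
    rw [← Real.exp_nat_mul, ← Real.exp_nat_mul]; congr 1; push_cast; ring
  have hfac : ((k ! : ℕ) : ℝ) ≤ (k : ℝ) ^ k := by exact_mod_cast Nat.factorial_le_pow k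
  have hfour : (4 : ℝ) ≤ 4 ^ k := le_self_pow₀ (by norm_num) hk.ne'
  calc (k ! / t ^ k * (2 * Real.exp (k / 2))) ^ 2
      = (k ! : ℝ) ^ 2 / (k / c) ^ k * 4 * Real.exp 1 ^ k := by
        rw [mul_pow, div_pow, mul_pow, htk, hexp]; ring
    _ ≤ ((k : ℝ) ^ k) ^ 2 / (k / c) ^ k * 4 ^ k * Real.exp 1 ^ k := by gcongr
    _ = (4 * Real.exp 1 * c * k) ^ k := by
        rw [div_pow]; field_simp; ring

end ProbabilityTheory.HasSubgaussianMGF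

lemma integral_Icc_re_mul_exp_two_pi_I (z : ℂ) :
    ∫ x in Set.Icc (0 : ℝ) 1, (z * exp (2 * Real.pi * I * x)).re = 0 := by
  have hcont : Continuous fun x : ℝ => z * exp (2 * Real.pi * I * x) := by fun_prop
  have hc : 2 * Real.pi * I ≠ 0 := by simp [Real.pi_ne_zero, I_ne_zero]
  refine (integral_re hcont.integrableOn_Icc).trans ?_
  rw [integral_Icc_eq_integral_Ioc,
    ← intervalIntegral.integral_of_le zero_le_one, intervalIntegral.integral_const_mul,
    integral_exp_mul_complex hc]
  simp [exp_two_pi_mul_I]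

lemma hasSubgaussianMGF_re_mul_exp_two_pi_I {Ω : Type*} {m : MeasurableSpace Ω} {μ : Measure Ω}
    [IsProbabilityMeasure μ] {θ : Ω → ℝ} (hθ : Measurable θ)
    (hmap : μ.map θ = volume.restrict (Set.Icc 0 1)) (z : ℂ) :
    HasSubgaussianMGF (fun ω => (z * exp (2 * Real.pi * I * θ ω)).re) (‖z‖₊ ^ 2) μ := by
  set f : ℝ → ℝ := fun x => (z * exp (2 * Real.pi * I * x)).re
  have hf : Continuous f := by fun_prop
  have hbound : ∀ x, f x ∈ Set.Icc (-‖z‖) ‖z‖ := fun x => by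
    refine abs_le.1 ((abs_re_le_norm _).trans_eq ?_)
    rw [norm_mul, show 2 * Real.pi * I * x = ((2 * Real.pi * x : ℝ) : ℂ) * I by push_cast; ring,
      norm_exp_ofReal_mul_I, mul_one]
  have hmean : μ[fun ω => f (θ ω)] = 0 := by
    rw [← integral_map hθ.aemeasurable hf.aestronglyMeasurable, hmap]
    exact integral_Icc_re_mul_exp_two_pi_I z
  have h := hasSubgaussianMGF_of_mem_Icc_of_integral_eq_zero (X := fun ω => f (θ ω))
    (hf.measurable.comp hθ).aemeasurable (ae_of_all _ fun ω => hbound (θ ω)) hmean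
  rwa [sub_neg_eq_add, ← two_mul, nnnorm_mul, nnnorm_norm, Real.nnnorm_ofNat,
    mul_div_cancel_left₀ _ two_ne_zero] at h

def PLcoeff {N₁ N₂ : ℕ} (a₁ a₂ : ℝ) (χ₁ : DirichletCharacter ℂ N₁)
    (χ₂ : DirichletCharacter ℂ N₂) (p : ℕ) : ℂ :=
  (a₁ * χ₁ p + a₂ * χ₂ p) / Real.sqrt p

section PLcoeff

variable {N₁ N₂ : ℕ} (a₁ a₂ : ℝ) (χ₁ : DirichletCharacter ℂ N₁) (χ₂ : DirichletCharacter ℂ N₂)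

lemma PLtheta_eq_sum (X : ℝ) (v : ℕ → ℝ) :
    PLtheta a₁ a₂ χ₁ χ₂ X v =
      ∑ p ∈ primesUptoSq X, PLcoeff a₁ a₂ χ₁ χ₂ p * exp (2 * Real.pi * I * v p) := by
  rw [PLtheta, Ptheta, Ptheta, mul_sum, mul_sum, ← sum_add_distrib]
  refine sum_congr rfl fun p _ => ?_
  rw [PLcoeff]
  ring

lemma norm_PLcoeff_sq_le (p : ℕ) :
    ‖PLcoeff a₁ a₂ χ₁ χ₂ p‖ ^ 2 ≤ (|a₁| + |a₂|) ^ 2 / p := by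
  have hnum : ‖(a₁ : ℂ) * χ₁ p + a₂ * χ₂ p‖ ≤ |a₁| + |a₂| := by
    refine (norm_add_le _ _).trans ?_
    rw [norm_mul, norm_mul, norm_real, norm_real, Real.norm_eq_abs, Real.norm_eq_abs]
    gcongr
    · exact mul_le_of_le_one_right (abs_nonneg _) (χ₁.norm_le_one _)
    · exact mul_le_of_le_one_right (abs_nonneg _) (χ₂.norm_le_one _)
  rw [PLcoeff, norm_div, norm_real, Real.norm_of_nonneg (Real.sqrt_nonneg _), div_pow,
    Real.sq_sqrt (Nat.cast_nonneg p)]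
  gcongr

lemma sum_norm_PLcoeff_sq_le (X : ℝ) :
    ∑ p ∈ primesUptoSq X, ‖PLcoeff a₁ a₂ χ₁ χ₂ p‖ ^ 2 ≤ (|a₁| + |a₂|) ^ 2 * Psi X := by
  rw [Psi, mul_sum]
  refine sum_le_sum fun p _ => ?_
  rw [mul_one_div]
  exact norm_PLcoeff_sq_le a₁ a₂ χ₁ χ₂ p

end PLcoeff

/-- **Lemma 2.4**: the `k`-th moment of `|Re P_ℒ(θ)|` with respect to the random variables
`θ = (θ_p)_p` (iid, uniform on `[0,1]`) is `O((ckΨ)^{k/2})` with `c` depending only on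
`a₁, a₂`. -/
theorem random_moments_of_Re_P_linear_combination (a₁ a₂ : ℝ) :
    ∃ c : ℝ, ∀ (M₁ M₂ : ℕ) (χ₁ : DirichletCharacter ℂ M₁) (χ₂ : DirichletCharacter ℂ M₂),
      χ₁.IsPrimitive → χ₂.IsPrimitive →
      (fun m : ℕ => χ₁ (m : ZMod M₁)) ≠ (fun m : ℕ => χ₂ (m : ZMod M₂)) →
      ∀ {Ω : Type} [MeasurableSpace Ω] (μ : Measure Ω), IsProbabilityMeasure μ →
      ∀ θ : ℕ → Ω → ℝ, (∀ p : ℕ, Measurable (θ p)) →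
      (∀ p : ℕ, p.Prime → μ.map (θ p) = volume.restrict (Set.Icc (0 : ℝ) 1)) →
      iIndepFun (fun p : Nat.Primes => θ (p : ℕ)) μ →
      ∀ k : ℕ, ∀ X : ℝ, 2 ≤ X →
      (∫ ω, |(PLtheta a₁ a₂ χ₁ χ₂ X fun p => θ p ω).re| ^ k ∂μ)
        ≤ (c * k * Psi X) ^ ((k : ℝ) / 2) := by
  refine ⟨4 * Real.exp 1 * (|a₁| + |a₂|) ^ 2, ?_⟩
  intro M₁ M₂ χ₁ χ₂ _ _ _ Ω _ μ _ θ hθ hmap hindep k X _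
  set z := PLcoeff a₁ a₂ χ₁ χ₂
  set T := (primesUptoSq X).subtype Nat.Prime
  have hprime : ∀ p ∈ primesUptoSq X, p.Prime := fun p hp => (mem_filter.1 hp).2
  set Y : Nat.Primes → Ω → ℝ := fun q ω => (z q * exp (2 * Real.pi * I * θ q ω)).re
  have hre : ∀ ω, (PLtheta a₁ a₂ χ₁ χ₂ X fun p => θ p ω).re = ∑ q ∈ T, Y q ω := fun ω => by
    rw [PLtheta_eq_sum, re_sum, sum_subtype_of_mem
      (fun p => (z p * exp (2 * Real.pi * I * θ p ω)).re) hprime]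
  have hY : HasSubgaussianMGF (fun ω => ∑ q ∈ T, Y q ω) (∑ q ∈ T, ‖z q‖₊ ^ 2) μ :=
    HasSubgaussianMGF.sum_of_iIndepFun
      (hindep.comp (fun q x => (z q * exp (2 * Real.pi * I * x)).re) fun q => by fun_prop)
      fun q _ => hasSubgaussianMGF_re_mul_exp_two_pi_I (hθ q) (hmap q q.2) (z q)
  have hparam : ((∑ q ∈ T, ‖z q‖₊ ^ 2 : ℝ≥0) : ℝ) ≤ (|a₁| + |a₂|) ^ 2 * Psi X := by
    push_cast
    rw [sum_subtype_of_mem (fun p => ‖z p‖ ^ 2) hprime]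
    exact sum_norm_PLcoeff_sq_le a₁ a₂ χ₁ χ₂ X
  simp_rw [hre]
  calc ∫ ω, |∑ q ∈ T, Y q ω| ^ k ∂μ
      ≤ (4 * Real.exp 1 * (∑ q ∈ T, ‖z q‖₊ ^ 2 : ℝ≥0) * k) ^ ((k : ℝ) / 2) :=
        hY.integral_abs_pow_le k
    _ ≤ (4 * Real.exp 1 * ((|a₁| + |a₂|) ^ 2 * Psi X) * k) ^ ((k : ℝ) / 2) := by gcongr
    _ = (4 * Real.exp 1 * (|a₁| + |a₂|) ^ 2 * k * Psi X) ^ ((k : ℝ) / 2) := by ring_nf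

end
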